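/- (Corollary 3.10, Euclidean case Q̄ = ℝ^n.) Suppose the smooth vector field X on ℝ^n × ℝ^n satisfies the reduced Chaplygin equations i_X(Ω − Ξ) = dH, where Ξ is a fiber-linear semibasic two-form. If there exists a smooth nowhere-vanishing f: ℝ^n → ℝ such that (df ∧ Θ)_z(X_C(z), v) − f(q)·Ξ_z(X_C(z), v) = 0 for all z = (q,p) and all v, where X_C is the Chaplygin-rescaled vector field, then div(f^{n−1}X) = 0 identically; that is, X preserves the measure f(q)^{n−1} dq dp. -/

import Mathlib

noncomputable section

open Matrix

/-- Configuration vectors: points of `ℝⁿ`. -/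
abbrev Vec (n : ℕ) : Type := Fin n → ℝ

/-- Phase space `ℝⁿ × ℝⁿ`, points `z = (q, p)`. -/
abbrev Phase (n : ℕ) : Type := Vec n × Vec n

/-- Canonical symplectic form `Ω(u,v) = ⟨u_q, v_p⟩ − ⟨u_p, v_q⟩`. -/
def Omega {n : ℕ} (u v : Phase n) : ℝ := u.1 ⬝ᵥ v.2 - u.2 ⬝ᵥ v.1

/-- Liouville one-form `Θ_z(v) = ⟨p, v_q⟩` at `z = (q,p)`. -/
def Theta {n : ℕ} (z v : Phase n) : ℝ := z.2 ⬝ᵥ v.1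

/-- Fiber scaling `Ψ_f(q,p) = (q, f(q)·p)`. -/
def Psi {n : ℕ} (f : Vec n → ℝ) (z : Phase n) : Phase n := (z.1, f z.1 • z.2)

/-- `Ψ_{1/f}`, the inverse of `Ψ_f`. -/
def PsiInv {n : ℕ} (f : Vec n → ℝ) : Phase n → Phase n := Psi fun q => (f q)⁻¹

/-- The Chaplygin-rescaled vector field
`X_C(z) := DΨ_f(Ψ_{1/f}(z))[(1/f(q))·X(Ψ_{1/f}(z))]`. -/
def ChapRescale {n : ℕ} (f : Vec n → ℝ) (X : Phase n → Phase n) (z : Phase n) : Phase n :=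
  fderiv ℝ (Psi f) (PsiInv f z) ((f z.1)⁻¹ • X (PsiInv f z))

/-- The two-form `df ∧ Θ`. -/
def dfTheta {n : ℕ} (f : Vec n → ℝ) (z u v : Phase n) : ℝ :=
  fderiv ℝ f z.1 u.1 * (z.2 ⬝ᵥ v.1) - fderiv ℝ f z.1 v.1 * (z.2 ⬝ᵥ u.1)

/-- Divergence of a vector field: `div Y (z) = trace DY(z)`. -/
def divergence {n : ℕ} (Y : Phase n → Phase n) (z : Phase n) : ℝ :=
  LinearMap.trace ℝ (Phase n) (fderiv ℝ Y z).toLinearMap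

/-- A fiber-linear semibasic two-form on phase space: a smooth assignment
`z ↦ Ξ_z` of alternating bilinear forms whose value depends only on the base
components of its arguments, and which is linear in the fiber variable `p`. -/
structure FiberLinearSemibasicTwoForm (n : ℕ) where
  form : Phase n → Phase n → Phase n → ℝ
  smooth : ∀ u v : Phase n, ContDiff ℝ (⊤ : ℕ∞) fun z => form z u v
  alt : ∀ z u v : Phase n, form z u v = - form z v u
  add_left : ∀ (z u u' v : Phase n), form z (u + u') v = form z u v + form z u' v
  smul_left : ∀ (z : Phase n) (c : ℝ) (u v : Phase n), form z (c • u) v = c * form z u v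
  semibasic : ∀ (z u v u' v' : Phase n), u.1 = u'.1 → v.1 = v'.1 → form z u v = form z u' v'
  fiber_add : ∀ (q p p' : Vec n) (u v : Phase n),
    form (q, p + p') u v = form (q, p) u v + form (q, p') u v
  fiber_smul : ∀ (q : Vec n) (c : ℝ) (p : Vec n) (u v : Phase n),
    form (q, c • p) u v = c * form (q, p) u v

/-!
Since `DΨ_f` preserves base components, `X_C` has base component `(X z).1 / f` at `Ψ_f z`; as
`df ∧ Θ` and `Ξ` are semibasic and fibre-linear, the hypothesis on `X_C` becomes
`(df ∧ Θ)(X, ·) = f · Ξ(X, ·)`. The reduced equations then split `X` as the Hamiltonian field `X_H`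
minus the vertical field `(0, F)` with `F = f⁻¹ ((∇f ⬝ A) p - (p ⬝ A) ∇f)`, where `A = ∂H/∂p`.
`X_H` is divergence free (Liouville), and because `∂A/∂p` is a symmetric Hessian the fibre
divergence of `F` is `(n - 1) f⁻¹ df(A)`. So `div X = -(n - 1) f⁻¹ df(A)`, which cancels against
`d(f ^ (n - 1))(X) = (n - 1) f ^ (n - 2) df(A)`.
-/

section LinearAlgebra

variable {ι : Type*} [Fintype ι] [DecidableEq ι]

theorem LinearMap.trace_prod {R M N : Type*} [CommRing R] [AddCommGroup M] [Module R M]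
    [AddCommGroup N] [Module R N] [Module.Free R M] [Module.Finite R M] [Module.Free R N]
    [Module.Finite R N] (L : (M × N) →ₗ[R] (M × N)) :
    trace R (M × N) L = trace R M (fst R M N ∘ₗ L ∘ₗ inl R M N)
      + trace R N (snd R M N ∘ₗ L ∘ₗ inr R M N) := by
  have hL : L = (L ∘ₗ inl R M N) ∘ₗ fst R M N + (L ∘ₗ inr R M N) ∘ₗ snd R M N := by
    refine LinearMap.ext fun x => ?_
    simp [← map_add]
  conv_lhs => rw [hL]
  rw [map_add, trace_comp_comm', trace_comp_comm' _ (snd R M N)]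

theorem LinearMap.trace_eq_sum_apply_single {R : Type*} [CommRing R] (L : (ι → R) →ₗ[R] (ι → R)) :
    trace R (ι → R) L = ∑ i, L (Pi.single i 1) i := by
  simp [trace_eq_matrix_trace R (Pi.basisFun R ι), Matrix.trace]

theorem LinearMap.apply_eq_dotProduct {R : Type*} [CommRing R] (φ : (ι → R) →ₗ[R] R) (v : ι → R) :
    φ v = (fun i => φ (Pi.single i 1)) ⬝ᵥ v := by
  conv_lhs => rw [← Finset.univ_sum_single v]
  simp only [dotProduct, map_sum]
  refine Finset.sum_congr rfl fun i _ => ?_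
  rw [mul_comm, ← smul_eq_mul, ← map_smul, ← Pi.single_smul', smul_eq_mul, mul_one]

end LinearAlgebra

section Calculus

variable {ι : Type*} [Fintype ι]
variable {E : Type*} [NormedAddCommGroup E] [NormedSpace ℝ E]

theorem HasFDerivAt.dotProduct {u v : E → ι → ℝ} {u' v' : E →L[ℝ] ι → ℝ} {x : E}
    (hu : HasFDerivAt u u' x) (hv : HasFDerivAt v v' x) :
    HasFDerivAt (fun y => u y ⬝ᵥ v y)
      (∑ i, (u x i • (ContinuousLinearMap.proj i).comp v'
        + v x i • (ContinuousLinearMap.proj i).comp u')) x :=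
  HasFDerivAt.fun_sum fun i _ => (hasFDerivAt_pi'.1 hu i).mul (hasFDerivAt_pi'.1 hv i)

theorem DifferentiableAt.dotProduct {u v : E → ι → ℝ} {x : E} (hu : DifferentiableAt ℝ u x)
    (hv : DifferentiableAt ℝ v x) : DifferentiableAt ℝ (fun y => u y ⬝ᵥ v y) x :=
  (hu.hasFDerivAt.dotProduct hv.hasFDerivAt).differentiableAt

theorem fderiv_dotProduct {u v : E → ι → ℝ} {x : E} (hu : DifferentiableAt ℝ u x)
    (hv : DifferentiableAt ℝ v x) (h : E) :
    fderiv ℝ (fun y => u y ⬝ᵥ v y) x h = fderiv ℝ u x h ⬝ᵥ v x + u x ⬝ᵥ fderiv ℝ v x h := by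
  rw [(hu.hasFDerivAt.dotProduct hv.hasFDerivAt).fderiv]
  simp [dotProduct, Finset.sum_add_distrib, mul_comm, add_comm]

def wedgeContract (w p a : ι → ℝ) : ι → ℝ := (w ⬝ᵥ a) • p - (p ⬝ᵥ a) • w

theorem wedgeContract_dotProduct (w p a v : ι → ℝ) :
    wedgeContract w p a ⬝ᵥ v = (w ⬝ᵥ a) * (p ⬝ᵥ v) - (p ⬝ᵥ a) * (w ⬝ᵥ v) := by
  simp [wedgeContract, sub_dotProduct, smul_dotProduct]

theorem trace_fderiv_wedgeContract {a : (ι → ℝ) → ι → ℝ} {w p : ι → ℝ}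
    (ha : DifferentiableAt ℝ a p)
    (hsymm : ∀ u v, fderiv ℝ a p u ⬝ᵥ v = u ⬝ᵥ fderiv ℝ a p v) :
    LinearMap.trace ℝ (ι → ℝ) (fderiv ℝ (fun x => wedgeContract w x (a x)) p).toLinearMap
      = (Fintype.card ι - 1) * (w ⬝ᵥ a p) := by
  have hwa : DifferentiableAt ℝ (fun x => w ⬝ᵥ a x) p :=
    (differentiableAt_const w).dotProduct ha
  have hxa : DifferentiableAt ℝ (fun x => x ⬝ᵥ a x) p :=
    (differentiableAt_id (x := p)).dotProduct ha
  have hD : HasFDerivAt (fun x => wedgeContract w x (a x))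
      ((w ⬝ᵥ a p) • ContinuousLinearMap.id ℝ (ι → ℝ)
        + (fderiv ℝ (fun x => w ⬝ᵥ a x) p).smulRight p
        - (fderiv ℝ (fun x => x ⬝ᵥ a x) p).smulRight w) p := by
    refine ((hwa.hasFDerivAt.fun_smul (hasFDerivAt_id p)).fun_sub
      (hxa.hasFDerivAt.fun_smul (hasFDerivAt_const w p))).congr_fderiv ?_
    simp
  rw [hD.fderiv]
  simp only [ContinuousLinearMap.toLinearMap_sub, ContinuousLinearMap.toLinearMap_add,
    ContinuousLinearMap.toLinearMap_smul, ContinuousLinearMap.coe_id,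
    ContinuousLinearMap.coe_smulRight, map_sub, map_add, map_smul, LinearMap.trace_id,
    Module.finrank_fintype_fun_eq_card, smul_eq_mul, LinearMap.trace_smulRight,
    ContinuousLinearMap.coe_coe, differentiableAt_const, ha, fderiv_dotProduct, fderiv_fun_const,
    Pi.zero_apply, _root_.zero_apply, zero_dotProduct, zero_add, differentiableAt_fun_id,
    fderiv_fun_id, ContinuousLinearMap.id_apply]
  -- the rank-one terms `w ⬝ᵥ Da p` and `p ⬝ᵥ Da w` cancel because `Da` is symmetric
  rw [dotProduct_comm w (fderiv ℝ a p p), hsymm]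
  ring

end Calculus

theorem ContDiffAt.differentiableAt_fderiv {E F : Type*} [NormedAddCommGroup E]
    [NormedSpace ℝ E] [NormedAddCommGroup F] [NormedSpace ℝ F] {g : E → F} {x : E}
    (hg : ContDiffAt ℝ 2 g x) : DifferentiableAt ℝ (fderiv ℝ g) x :=
  (hg.fderiv_right (m := 1) le_rfl).differentiableAt one_ne_zero

section Gradient

variable {ι : Type*} [Fintype ι] [DecidableEq ι]

def grad (g : (ι → ℝ) → ℝ) (x : ι → ℝ) : ι → ℝ := fun i => fderiv ℝ g x (Pi.single i 1)

theorem fderiv_apply_eq_grad_dotProduct (g : (ι → ℝ) → ℝ) (x v : ι → ℝ) :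
    fderiv ℝ g x v = grad g x ⬝ᵥ v :=
  (fderiv ℝ g x : (ι → ℝ) →ₗ[ℝ] ℝ).apply_eq_dotProduct v

theorem hasFDerivAt_grad {g : (ι → ℝ) → ℝ} {x : ι → ℝ}
    (hg : DifferentiableAt ℝ (fderiv ℝ g) x) :
    HasFDerivAt (grad g)
      ((ContinuousLinearMap.pi fun i => ContinuousLinearMap.apply ℝ ℝ (Pi.single i 1)).comp
        (fderiv ℝ (fderiv ℝ g) x)) x := by
  exact (ContinuousLinearMap.pi fun i =>
    ContinuousLinearMap.apply ℝ ℝ (Pi.single i 1)).hasFDerivAt.comp x hg.hasFDerivAt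

theorem ContDiffAt.differentiableAt_grad {g : (ι → ℝ) → ℝ} {x : ι → ℝ}
    (hg : ContDiffAt ℝ 2 g x) : DifferentiableAt ℝ (grad g) x :=
  (hasFDerivAt_grad hg.differentiableAt_fderiv).differentiableAt

theorem fderiv_grad_dotProduct {g : (ι → ℝ) → ℝ} {x : ι → ℝ}
    (hg : DifferentiableAt ℝ (fderiv ℝ g) x) (u v : ι → ℝ) :
    fderiv ℝ (grad g) x u ⬝ᵥ v = fderiv ℝ (fderiv ℝ g) x u v := by
  rw [(hasFDerivAt_grad hg).fderiv]
  exact ((fderiv ℝ (fderiv ℝ g) x u : (ι → ℝ) →ₗ[ℝ] ℝ).apply_eq_dotProduct v).symm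

theorem fderiv_grad_dotProduct_comm {g : (ι → ℝ) → ℝ} {x : ι → ℝ} (hg : ContDiffAt ℝ 2 g x)
    (u v : ι → ℝ) : fderiv ℝ (grad g) x u ⬝ᵥ v = u ⬝ᵥ fderiv ℝ (grad g) x v := by
  rw [dotProduct_comm u, fderiv_grad_dotProduct hg.differentiableAt_fderiv,
    fderiv_grad_dotProduct hg.differentiableAt_fderiv, hg.isSymmSndFDerivAt (by simp)]

end Gradient

theorem fderiv_comp_prodMk_right {E F G : Type*} [NormedAddCommGroup E] [NormedSpace ℝ E]
    [NormedAddCommGroup F] [NormedSpace ℝ F] [NormedAddCommGroup G] [NormedSpace ℝ G]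
    {Y : E × F → G} {q : E} {p : F} (hY : DifferentiableAt ℝ Y (q, p)) :
    fderiv ℝ (fun p' => Y (q, p')) p = (fderiv ℝ Y (q, p)).comp (.inr ℝ E F) :=
  (hY.hasFDerivAt.comp p (hasFDerivAt_prodMk_right q p)).fderiv

section PhaseSpace

variable {n : ℕ}

def omegaSharp (n : ℕ) : (Phase n →L[ℝ] ℝ) →L[ℝ] Phase n :=
  (ContinuousLinearMap.pi fun j => ContinuousLinearMap.apply ℝ ℝ ((0 : Vec n), Pi.single j 1)).prod
    (-ContinuousLinearMap.pi fun i => ContinuousLinearMap.apply ℝ ℝ ((Pi.single i 1 : Vec n), 0))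

theorem Omega_omegaSharp (L : Phase n →L[ℝ] ℝ) (v : Phase n) : Omega (omegaSharp n L) v = L v := by
  have hv : L v = L ((0 : Vec n), v.2) + L (v.1, 0) := by rw [← map_add]; simp
  have h₂ := ((L.comp (.inr ℝ (Vec n) (Vec n)) : Vec n →ₗ[ℝ] ℝ)).apply_eq_dotProduct v.2
  have h₁ := ((L.comp (.inl ℝ (Vec n) (Vec n)) : Vec n →ₗ[ℝ] ℝ)).apply_eq_dotProduct v.1
  simp only [ContinuousLinearMap.coe_coe, ContinuousLinearMap.comp_apply,
    ContinuousLinearMap.inr_apply, ContinuousLinearMap.inl_apply] at h₁ h₂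
  rw [hv, h₁, h₂]
  simp [Omega, omegaSharp, neg_dotProduct]

theorem eq_omegaSharp_of_Omega_eq {u : Phase n} {L : Phase n →L[ℝ] ℝ}
    (h : ∀ v, Omega u v = L v) : u = omegaSharp n L := by
  have hsep : ∀ v, Omega u v = Omega (omegaSharp n L) v := fun v => by rw [h, Omega_omegaSharp]
  ext i
  · simpa [Omega] using hsep (0, Pi.single i 1)
  · simpa [Omega] using hsep (Pi.single i 1, 0)

def hamiltonianField (H : Phase n → ℝ) (z : Phase n) : Phase n := omegaSharp n (fderiv ℝ H z)

theorem hamiltonianField_fst {H : Phase n → ℝ} {q p : Vec n} (hH : DifferentiableAt ℝ H (q, p)) :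
    (hamiltonianField H (q, p)).1 = grad (fun p' => H (q, p')) p := by
  ext j
  simp [hamiltonianField, omegaSharp, grad, fderiv_comp_prodMk_right hH]

theorem ContDiffAt.differentiableAt_hamiltonianField {H : Phase n → ℝ} {z : Phase n}
    (hH : ContDiffAt ℝ 2 H z) : DifferentiableAt ℝ (hamiltonianField H) z :=
  ((omegaSharp n).hasFDerivAt.comp z hH.differentiableAt_fderiv.hasFDerivAt).differentiableAt

theorem divergence_sub {Y₁ Y₂ : Phase n → Phase n} {z : Phase n} (h₁ : DifferentiableAt ℝ Y₁ z)
    (h₂ : DifferentiableAt ℝ Y₂ z) :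
    divergence (fun w => Y₁ w - Y₂ w) z = divergence Y₁ z - divergence Y₂ z := by
  simp [divergence, fderiv_fun_sub h₁ h₂]

theorem divergence_smul {g : Phase n → ℝ} {Y : Phase n → Phase n} {z : Phase n}
    (hg : DifferentiableAt ℝ g z) (hY : DifferentiableAt ℝ Y z) :
    divergence (fun w => g w • Y w) z = g z * divergence Y z + fderiv ℝ g z (Y z) := by
  simp [divergence, fderiv_fun_smul hg hY]

theorem divergence_hamiltonianField {H : Phase n → ℝ} {z : Phase n} (hH : ContDiffAt ℝ 2 H z) :
    divergence (hamiltonianField H) z = 0 := by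
  have hD : fderiv ℝ (hamiltonianField H) z = (omegaSharp n).comp (fderiv ℝ (fderiv ℝ H) z) :=
    ((omegaSharp n).hasFDerivAt.comp z hH.differentiableAt_fderiv.hasFDerivAt).fderiv
  have hsymm := hH.isSymmSndFDerivAt (by simp)
  rw [divergence, hD, LinearMap.trace_prod, LinearMap.trace_eq_sum_apply_single,
    LinearMap.trace_eq_sum_apply_single]
  simp [omegaSharp, hsymm _ (0, _)]

theorem divergence_vertical {G : Phase n → Vec n} {z : Phase n} (hG : DifferentiableAt ℝ G z) :
    divergence (fun w => ((0 : Vec n), G w)) z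
      = LinearMap.trace ℝ (Vec n) (fderiv ℝ (fun p => G (z.1, p)) z.2).toLinearMap := by
  have hD : fderiv ℝ (fun w => ((0 : Vec n), G w)) z
      = (0 : Phase n →L[ℝ] Vec n).prod (fderiv ℝ G z) :=
    ((hasFDerivAt_const (0 : Vec n) z).prodMk hG.hasFDerivAt).fderiv
  rw [divergence, hD, LinearMap.trace_prod, fderiv_comp_prodMk_right hG]
  simp [← LinearMap.comp_assoc]

end PhaseSpace

section Chaplygin

variable {n : ℕ}

theorem fst_fderiv_Psi {f : Vec n → ℝ} {z : Phase n} (hf : DifferentiableAt ℝ f z.1)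
    (u : Phase n) : (fderiv ℝ (Psi f) z u).1 = u.1 := by
  have hPsi : DifferentiableAt ℝ (Psi f) z :=
    differentiableAt_fst.prodMk ((hf.comp z differentiableAt_fst).smul differentiableAt_snd)
  have hfst : fderiv ℝ (fun w => (Psi f w).1) z = fderiv ℝ Prod.fst z := rfl
  rw [fderiv.fst hPsi, fderiv_fst] at hfst
  exact congrArg (· u) hfst

theorem PsiInv_Psi {f : Vec n → ℝ} {z : Phase n} (hf0 : f z.1 ≠ 0) : PsiInv f (Psi f z) = z := by
  simp [PsiInv, Psi, smul_smul, hf0]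

theorem smul_fst_ChapRescale_Psi {f : Vec n → ℝ} {X : Phase n → Phase n} {z : Phase n}
    (hf : DifferentiableAt ℝ f z.1) (hf0 : f z.1 ≠ 0) :
    f z.1 • (ChapRescale f X (Psi f z)).1 = (X z).1 := by
  rw [ChapRescale, PsiInv_Psi hf0, fst_fderiv_Psi hf]
  simp [Psi, smul_smul, hf0]

theorem FiberLinearSemibasicTwoForm.form_Psi (Ξ : FiberLinearSemibasicTwoForm n) (f : Vec n → ℝ)
    (z u v : Phase n) : Ξ.form (Psi f z) u v = Ξ.form z (f z.1 • u) v := by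
  rw [Psi, Ξ.fiber_smul, Ξ.smul_left]

theorem dfTheta_Psi (f : Vec n → ℝ) (z u v : Phase n) :
    dfTheta f (Psi f z) u v = dfTheta f z (f z.1 • u) v := by
  simp only [dfTheta, Psi, Prod.smul_fst, map_smul, smul_dotProduct, dotProduct_smul, smul_eq_mul]
  ring

theorem dfTheta_eq_wedgeContract (f : Vec n → ℝ) (z u v : Phase n) :
    dfTheta f z u v = wedgeContract (grad f z.1) z.2 u.1 ⬝ᵥ v.1 := by
  rw [dfTheta, wedgeContract_dotProduct, fderiv_apply_eq_grad_dotProduct,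
    fderiv_apply_eq_grad_dotProduct]
  ring

theorem dfTheta_eq_mul_form {f : Vec n → ℝ} {X : Phase n → Phase n}
    {Ξ : FiberLinearSemibasicTwoForm n} (hf : Differentiable ℝ f) (hf0 : ∀ q, f q ≠ 0)
    (hvan : ∀ z v, dfTheta f z (ChapRescale f X z) v - f z.1 * Ξ.form z (ChapRescale f X z) v = 0)
    (z v : Phase n) : dfTheta f z (X z) v = f z.1 * Ξ.form z (X z) v := by
  have h := hvan (Psi f z) v
  have hfst := smul_fst_ChapRescale_Psi (X := X) (hf z.1) (hf0 z.1)
  rw [sub_eq_zero, dfTheta_Psi, Ξ.form_Psi, dfTheta_eq_wedgeContract, Prod.smul_fst, hfst,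
    Ξ.semibasic z _ v (X z) v (by rw [Prod.smul_fst, hfst]) rfl] at h
  rw [dfTheta_eq_wedgeContract]
  exact h

end Chaplygin

section ChaplyginForce

variable {n : ℕ}

def chaplyginForce (f : Vec n → ℝ) (X : Phase n → Phase n) (z : Phase n) : Vec n :=
  (f z.1)⁻¹ • wedgeContract (grad f z.1) z.2 (X z).1

theorem add_chaplyginForce_eq_hamiltonianField {f : Vec n → ℝ} {X : Phase n → Phase n}
    {H : Phase n → ℝ} {Ξ : FiberLinearSemibasicTwoForm n} (hf0 : ∀ q, f q ≠ 0)
    (heq : ∀ z v, Omega (X z) v - Ξ.form z (X z) v = fderiv ℝ H z v)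
    (hdfTheta : ∀ z v, dfTheta f z (X z) v = f z.1 * Ξ.form z (X z) v) (z : Phase n) :
    X z + ((0 : Vec n), chaplyginForce f X z) = hamiltonianField H z := by
  refine eq_omegaSharp_of_Omega_eq fun v => ?_
  have hΞ : Ξ.form z (X z) v = chaplyginForce f X z ⬝ᵥ v.1 := by
    rw [chaplyginForce, smul_dotProduct, ← dfTheta_eq_wedgeContract, hdfTheta, smul_eq_mul,
      inv_mul_cancel_left₀ (hf0 z.1)]
  rw [← heq z v, hΞ]
  simp only [Omega, Prod.fst_add, Prod.snd_add, add_zero, add_dotProduct]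
  ring

theorem divergence_eq_of_add_chaplyginForce_eq {f : Vec n → ℝ} {X : Phase n → Phase n}
    {H : Phase n → ℝ} {z : Phase n} (hX : DifferentiableAt ℝ X z) (hH : ContDiff ℝ 2 H)
    (hdecomp : ∀ w, X w + ((0 : Vec n), chaplyginForce f X w) = hamiltonianField H w) :
    divergence X z = -(((n : ℝ) - 1) * ((f z.1)⁻¹ * (grad f z.1 ⬝ᵥ (X z).1))) := by
  have hXH := (hH.contDiffAt (x := z)).differentiableAt_hamiltonianField
  have hV : DifferentiableAt ℝ (fun w => ((0 : Vec n), chaplyginForce f X w)) z := by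
    rw [funext fun w => eq_sub_of_add_eq' (hdecomp w)]
    exact hXH.sub hX
  have hX_eq : X = fun w => hamiltonianField H w - ((0 : Vec n), chaplyginForce f X w) :=
    funext fun w => eq_sub_of_add_eq (hdecomp w)
  have hfst : ∀ p, (X (z.1, p)).1 = grad (fun p' => H (z.1, p')) p := fun p => by
    rw [← hamiltonianField_fst (hH.differentiable two_ne_zero _), ← hdecomp]
    simp
  have hforce : (fun p => chaplyginForce f X (z.1, p))
      = (f z.1)⁻¹ • fun p => wedgeContract (grad f z.1) p (grad (fun p' => H (z.1, p')) p) := by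
    ext1 p
    simp [chaplyginForce, hfst]
  have hh : ContDiff ℝ 2 fun p' => H (z.1, p') := hH.comp (contDiff_prodMk_right z.1)
  conv_lhs => rw [hX_eq]
  rw [divergence_sub hXH hV, divergence_hamiltonianField hH.contDiffAt,
    divergence_vertical hV.snd, hforce, fderiv_const_smul_field, Pi.smul_apply,
    ContinuousLinearMap.toLinearMap_smul, map_smul,
    trace_fderiv_wedgeContract hh.contDiffAt.differentiableAt_grad
      (fderiv_grad_dotProduct_comm hh.contDiffAt), ← hfst, Fintype.card_fin, smul_eq_mul]
  ring

end ChaplyginForce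

theorem statement4 (n : ℕ) (hn : 1 ≤ n) (X : Phase n → Phase n) (H : Phase n → ℝ)
    (Ξ : FiberLinearSemibasicTwoForm n) (f : Vec n → ℝ)
    (hX : ContDiff ℝ (⊤ : ℕ∞) X) (hH : ContDiff ℝ (⊤ : ℕ∞) H)
    (hf : ContDiff ℝ (⊤ : ℕ∞) f) (hf0 : ∀ q, f q ≠ 0)
    (heq : ∀ (z v : Phase n), Omega (X z) v - Ξ.form z (X z) v = fderiv ℝ H z v)
    (hvan : ∀ (z v : Phase n),
      dfTheta f z (ChapRescale f X z) v - f z.1 * Ξ.form z (ChapRescale f X z) v = 0) :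
    ∀ z : Phase n, divergence (fun w => f w.1 ^ (n - 1) • X w) z = 0 := by
  have hf1 : Differentiable ℝ f := hf.differentiable (by simp)
  have hdecomp := add_chaplyginForce_eq_hamiltonianField hf0 heq (dfTheta_eq_mul_form hf1 hf0 hvan)
  intro z
  have hpow : HasFDerivAt (fun w : Phase n => f w.1 ^ (n - 1))
      ((((n - 1 : ℕ) : ℝ) * f z.1 ^ (n - 1 - 1)) •
        (fderiv ℝ f z.1).comp (ContinuousLinearMap.fst ℝ (Vec n) (Vec n))) z :=
    (hasDerivAt_pow (n - 1) (f z.1)).comp_hasFDerivAt z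
      ((hf1 z.1).hasFDerivAt.comp z hasFDerivAt_fst)
  have hXz := (hX.differentiable (by simp)).differentiableAt (x := z)
  rw [divergence_smul hpow.differentiableAt hXz, hpow.fderiv,
    divergence_eq_of_add_chaplyginForce_eq hXz (hH.of_le (by norm_cast)) hdecomp]
  simp only [_root_.smul_apply, ContinuousLinearMap.comp_apply,
    ContinuousLinearMap.coe_fst', smul_eq_mul, fderiv_apply_eq_grad_dotProduct]
  obtain ⟨m, rfl⟩ : ∃ m, n = m + 1 := ⟨n - 1, by omega⟩
  rcases m with _ | k
  · simp
  · simp only [Nat.add_sub_cancel, Nat.cast_add, Nat.cast_one, pow_succ]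
    field_simp [hf0 z.1]
    ring
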